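/- arXiv:2209.15274 — 6 statements merged into one kernel-verified Lean document; each statement's English description precedes it below -/
import Mathlib

section
/- Let A be an N×m real matrix with rows A_1,…,A_N, let v ∈ ℝ^m, let q ≤ N be a natural number, and let e ∈ ℝ^N be an error vector whose support (the set of indices k with e_k ≠ 0) has cardinality at most q. Set y = A v + e. If for every subset K ⊆ {1,…,N} with |K| = q and every z ∈ ℝ^m with z ≠ 0 one has Σ_{k∈K} |A_k · z| ≤ Σ_{k∉K} |A_k · z|, then v is a minimizer of the function J(w) = Σ_{k=1}^N |y_k − A_k · w| over w ∈ ℝ^m. -/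
/-- If the error `e` has support of size at most `q` and the row condition
`∑_{k∈K} |A_k·z| ≤ ∑_{k∉K} |A_k·z|` holds for every `K` of cardinality `q` and every `z ≠ 0`,
then `v` minimizes the ℓ1 residual `w ↦ ∑_k |y_k − A_k·w|` where `y = A v + e`. -/
theorem stmt_0 (N m : ℕ) (A : Matrix (Fin N) (Fin m) ℝ) (v : Fin m → ℝ)
    (q : ℕ) (hq : q ≤ N) (e : Fin N → ℝ)
    (he : (Finset.univ.filter fun k => e k ≠ 0).card ≤ q)
    (y : Fin N → ℝ) (hy : ∀ k, y k = (∑ j, A k j * v j) + e k)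
    (hcond : ∀ K : Finset (Fin N), K.card = q →
      ∀ z : Fin m → ℝ, z ≠ 0 →
        ∑ k ∈ K, |∑ j, A k j * z j| ≤ ∑ k ∈ Kᶜ, |∑ j, A k j * z j|) :
    ∀ w : Fin m → ℝ,
      ∑ k, |y k - ∑ j, A k j * v j| ≤ ∑ k, |y k - ∑ j, A k j * w j| := by
  intro w
  set z : Fin m → ℝ := fun j => v j - w j with hzdef
  set u : Fin N → ℝ := fun k => ∑ j, A k j * z j with hudef
  have hres : ∀ k, y k - ∑ j, A k j * w j = e k + u k := by
    intro k
    simp only [hy, hudef, hzdef, mul_sub, Finset.sum_sub_distrib]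
    ring
  have hlhs : ∀ k, y k - ∑ j, A k j * v j = e k := by intro k; simp [hy]
  simp only [hlhs, hres]
  by_cases hz : z = 0
  · have hu0 : ∀ k, u k = 0 := by
      intro k; simp [hudef, hz]
    simp [hu0]
  · obtain ⟨K, hK1, hK2⟩ := Finset.exists_superset_card_eq he (by simpa using hq)
    have hcond' : ∑ k ∈ K, |u k| ≤ ∑ k ∈ Kᶜ, |u k| := hcond K hK2 z hz
    have hKc : ∀ k ∈ Kᶜ, e k = 0 := by
      intro k hk
      by_contra h
      exact (Finset.mem_compl.mp hk) (hK1 (Finset.mem_filter.mpr ⟨Finset.mem_univ k, h⟩))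
    rw [← Finset.sum_add_sum_compl K fun k => |e k|,
        ← Finset.sum_add_sum_compl K fun k => |e k + u k|]
    have h1 : ∑ k ∈ K, |e k| ≤ ∑ k ∈ K, |e k + u k| + ∑ k ∈ K, |u k| := by
      rw [← Finset.sum_add_distrib]
      apply Finset.sum_le_sum; intro k _
      calc |e k| = |(e k + u k) + (-u k)| := by ring_nf
        _ ≤ |e k + u k| + |(-u k)| := abs_add_le _ _
        _ = |e k + u k| + |u k| := by rw [abs_neg]
    have h2 : ∑ k ∈ Kᶜ, |e k| = 0 := Finset.sum_eq_zero fun k hk => by rw [hKc k hk, abs_zero]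
    have h3 : ∑ k ∈ Kᶜ, |e k + u k| = ∑ k ∈ Kᶜ, |u k| :=
      Finset.sum_congr rfl fun k hk => by rw [hKc k hk, zero_add]
    rw [h2, h3]
    linarith
end

section
/- Let A be an N×m real matrix with rows A_1,…,A_N, let v ∈ ℝ^m, let q ≤ N, and let e ∈ ℝ^N have support of cardinality at most q. Set y = A v + e. If for every subset K ⊆ {1,…,N} with |K| = q and every z ∈ ℝ^m with z ≠ 0 one has the strict inequality Σ_{k∈K} |A_k · z| < Σ_{k∉K} |A_k · z|, then v is the unique minimizer of J(w) = Σ_{k=1}^N |y_k − A_k · w| over w ∈ ℝ^m; that is, J(w) > J(v) for all w ≠ v. -/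
/-- Under the strict row condition, `v` is the *unique* minimizer of the
ℓ1 decoding objective `w ↦ ∑_k |y_k − A_k·w|` where `y = A v + e` and `e` is supported
on at most `q` coordinates. -/
theorem stmt_1 (N m : ℕ) (A : Matrix (Fin N) (Fin m) ℝ) (v : Fin m → ℝ)
    (q : ℕ) (hq : q ≤ N) (e : Fin N → ℝ)
    (he : (Finset.univ.filter fun k => e k ≠ 0).card ≤ q)
    (y : Fin N → ℝ) (hy : ∀ k, y k = (∑ j, A k j * v j) + e k)
    (hcond : ∀ K : Finset (Fin N), K.card = q →
      ∀ z : Fin m → ℝ, z ≠ 0 →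
        ∑ k ∈ K, |∑ j, A k j * z j| < ∑ k ∈ Kᶜ, |∑ j, A k j * z j|) :
    ∀ w : Fin m → ℝ, w ≠ v →
      ∑ k, |y k - ∑ j, A k j * v j| < ∑ k, |y k - ∑ j, A k j * w j| := by
  intro w hw
  set z : Fin m → ℝ := fun j => v j - w j with hzdef
  have hzne : z ≠ 0 := by
    intro h
    apply hw
    funext j
    have := congrFun h j
    have : v j - w j = 0 := this
    linarith
  obtain ⟨K, hSK, hK⟩ := Finset.exists_superset_card_eq he (by simpa using hq)
  have hcondK := hcond K hK z hzne
  have h1 : ∀ k, y k - ∑ j, A k j * v j = e k := by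
    intro k; rw [hy]; ring
  have h2 : ∀ k, y k - ∑ j, A k j * w j = e k + ∑ j, A k j * z j := by
    intro k
    have hsum : ∑ j, A k j * z j = (∑ j, A k j * v j) - ∑ j, A k j * w j := by
      rw [← Finset.sum_sub_distrib]
      exact Finset.sum_congr rfl fun j _ => by simp [hzdef]; ring
    rw [hy, hsum]; ring
  simp_rw [h1, h2]
  rw [← Finset.sum_add_sum_compl K fun k => |e k|,
      ← Finset.sum_add_sum_compl K fun k => |e k + ∑ j, A k j * z j|]
  have hec : ∀ k ∈ Kᶜ, e k = 0 := by
    intro k hk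
    by_contra h
    exact (Finset.mem_compl.mp hk) (hSK (Finset.mem_filter.mpr ⟨Finset.mem_univ _, h⟩))
  have hz1 : ∑ k ∈ Kᶜ, |e k| = 0 :=
    Finset.sum_eq_zero fun k hk => by simp [hec k hk]
  have hz2 : ∑ k ∈ Kᶜ, |e k + ∑ j, A k j * z j| = ∑ k ∈ Kᶜ, |∑ j, A k j * z j| :=
    Finset.sum_congr rfl fun k hk => by simp [hec k hk]
  rw [hz1, hz2, add_zero]
  have htri : ∑ k ∈ K, |e k| ≤ (∑ k ∈ K, |e k + ∑ j, A k j * z j|) + ∑ k ∈ K, |∑ j, A k j * z j| := by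
    rw [← Finset.sum_add_distrib]
    refine Finset.sum_le_sum fun k _ => ?_
    calc |e k| = |(e k + ∑ j, A k j * z j) + -(∑ j, A k j * z j)| := by
          congr 1; ring
      _ ≤ |e k + ∑ j, A k j * z j| + |∑ j, A k j * z j| := by
          simpa using abs_add_le (e k + ∑ j, A k j * z j) (-(∑ j, A k j * z j))
  linarith
end

section
/- Let A be an N×m real matrix with rows A_1,…,A_N and let q ≤ N. Suppose there exist a subset K ⊆ {1,…,N} with |K| = q and a vector z ∈ ℝ^m with z ≠ 0 such that Σ_{k∈K} |A_k · z| ≥ Σ_{k∉K} |A_k · z|. Then for every v ∈ ℝ^m there exists an error vector e ∈ ℝ^N supported in K (e_k = 0 for k ∉ K) and a vector v' ≠ v such that, with y = A v + e, one has Σ_{k=1}^N |y_k − A_k · v'| ≤ Σ_{k=1}^N |y_k − A_k · v|; in particular the ℓ1 decoder cannot uniquely recover v. (One may take e_k = A_k · z for k ∈ K and v' = v + z.) -/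
/-- Necessity of the row condition. If some set `K` of cardinality `q` and
some `z ≠ 0` violate the row condition (i.e. `∑_{k∈K} |A_k·z| ≥ ∑_{k∉K} |A_k·z|`), then
for every `v` there is an error `e` supported in `K` and a `v' ≠ v` which achieves an
ℓ1 residual no larger than that of `v`, so the ℓ1 decoder cannot uniquely recover `v`. -/
theorem stmt_2 (N m : ℕ) (A : Matrix (Fin N) (Fin m) ℝ) (q : ℕ) (hq : q ≤ N)
    (K : Finset (Fin N)) (hK : K.card = q) (z : Fin m → ℝ) (hz : z ≠ 0)
    (hviol : ∑ k ∈ Kᶜ, |∑ j, A k j * z j| ≤ ∑ k ∈ K, |∑ j, A k j * z j|) :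
    ∀ v : Fin m → ℝ, ∃ e : Fin N → ℝ, (∀ k ∉ K, e k = 0) ∧
      ∃ v' : Fin m → ℝ, v' ≠ v ∧
        ∑ k, |((∑ j, A k j * v j) + e k) - ∑ j, A k j * v' j| ≤
          ∑ k, |((∑ j, A k j * v j) + e k) - ∑ j, A k j * v j| := by
  intro v
  refine ⟨fun k => if k ∈ K then ∑ j, A k j * z j else 0, fun k hk => by simp [hk],
    v + z, ?_, ?_⟩
  · intro h
    apply hz
    funext j
    have := congrFun h j
    simpa using this
  · have hL : ∀ k : Fin N,
        |((∑ j, A k j * v j) + (if k ∈ K then ∑ j, A k j * z j else 0))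
          - ∑ j, A k j * (v + z) j|
        = if k ∈ K then 0 else |∑ j, A k j * z j| := by
      intro k
      have hsum : ∑ j, A k j * (v + z) j = (∑ j, A k j * v j) + ∑ j, A k j * z j := by
        rw [← Finset.sum_add_distrib]
        exact Finset.sum_congr rfl fun j _ => by simp [mul_add]
      by_cases hk : k ∈ K
      · rw [if_pos hk, if_pos hk, hsum]
        simp
      · rw [if_neg hk, if_neg hk, hsum, add_zero, abs_sub_comm]
        congr 1
        ring
    have hR : ∀ k : Fin N,
        |((∑ j, A k j * v j) + (if k ∈ K then ∑ j, A k j * z j else 0))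
          - ∑ j, A k j * v j|
        = if k ∈ K then |∑ j, A k j * z j| else 0 := by
      intro k
      by_cases hk : k ∈ K <;> simp [hk]
    simp only [hL, hR, Finset.sum_ite, Finset.sum_const, smul_zero]
    simpa [Finset.filter_mem_eq_inter, Finset.filter_not, Finset.compl_eq_univ_sdiff] using hviol
end

section
/- Let n, m be positive integers, let A be an n×m real matrix with rows A_1,…,A_n, let 𝒰 be a finite set of vectors u ∈ {0,1}^n, and let 𝒰_B ⊆ 𝒰. For u ∈ 𝒰 and i ∈ {1,…,n}, define the row R_{u,i} = u_i · A_i ∈ ℝ^m of the stacked matrix A₁ (so R_{u,i} is the zero row when u_i = 0). Let v ∈ ℝ^m and let e : 𝒰 × {1,…,n} → ℝ satisfy e_{u,i} = 0 whenever u ∉ 𝒰_B, and set z̄_{u,i} = R_{u,i} · v + e_{u,i}. Let q = n · |𝒰_B|. If for every subset 𝒦 ⊆ 𝒰 × {1,…,n} with |𝒦| = q and every z ∈ ℝ^m with z ≠ 0 one has Σ_{(u,i)∈𝒦} |R_{u,i} · z| < Σ_{(u,i)∉𝒦} |R_{u,i} · z|, then v is the unique minimizer over w ∈ ℝ^m of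 J(w) = Σ_{u∈𝒰} Σ_{i=1}^n |z̄_{u,i} − R_{u,i} · w|. -/
/-- Block form of Theorem 1. Activation patterns `u ∈ {0,1}^n` (encoded as
`Fin n → Bool`), stacked rows `R u i = u_i • A_i`, errors `e u i` vanishing outside the
Byzantine patterns `UB`, observations `z̄ u i = R u i · v + e u i`, and `q = n·|UB|`.
Under the strict row condition on all subsets `𝒦 ⊆ 𝒰 × {1,…,n}` of cardinality `q`,
`v` is the unique minimizer of the secure ℓ1 decoder `J`. -/
theorem stmt_7 (n m : ℕ) (hn : 0 < n) (hm : 0 < m)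
    (A : Matrix (Fin n) (Fin m) ℝ)
    (U UB : Finset (Fin n → Bool)) (hUB : UB ⊆ U)
    (R : (Fin n → Bool) → Fin n → Fin m → ℝ)
    (hR : ∀ u i j, R u i j = (if u i then (1 : ℝ) else 0) * A i j)
    (v : Fin m → ℝ) (e : (Fin n → Bool) → Fin n → ℝ)
    (he : ∀ u ∉ UB, ∀ i, e u i = 0)
    (zbar : (Fin n → Bool) → Fin n → ℝ)
    (hzbar : ∀ u i, zbar u i = (∑ j, R u i j * v j) + e u i)
    (q : ℕ) (hq : q = n * UB.card)
    (hcond : ∀ K : Finset ((Fin n → Bool) × Fin n),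
      K ⊆ U ×ˢ Finset.univ → K.card = q →
      ∀ z : Fin m → ℝ, z ≠ 0 →
        ∑ p ∈ K, |∑ j, R p.1 p.2 j * z j| <
          ∑ p ∈ (U ×ˢ Finset.univ) \ K, |∑ j, R p.1 p.2 j * z j|) :
    ∀ w : Fin m → ℝ, w ≠ v →
      ∑ u ∈ U, ∑ i, |zbar u i - ∑ j, R u i j * v j| <
        ∑ u ∈ U, ∑ i, |zbar u i - ∑ j, R u i j * w j| := by

  intro w hw
  set z : Fin m → ℝ := fun j => v j - w j with hz
  have hzne : z ≠ 0 := by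
    intro h
    apply hw
    funext j
    have := congrFun h j
    simp [hz] at this
    linarith
  set K : Finset ((Fin n → Bool) × Fin n) := UB ×ˢ (Finset.univ : Finset (Fin n)) with hK
  have hKsub : K ⊆ U ×ˢ (Finset.univ : Finset (Fin n)) :=
    Finset.product_subset_product hUB (le_refl _)
  have hKcard : K.card = q := by
    simp [hK, Finset.card_product, hq, Nat.mul_comm]
  have key := hcond K hKsub hKcard z hzne
  have hv : ∀ u i, zbar u i - ∑ j, R u i j * v j = e u i := by
    intro u i; rw [hzbar]; ring
  have hr : ∀ u i, zbar u i - ∑ j, R u i j * w j = e u i + ∑ j, R u i j * z j := by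
    intro u i
    rw [hzbar]
    have : ∑ j, R u i j * z j = (∑ j, R u i j * v j) - ∑ j, R u i j * w j := by
      rw [← Finset.sum_sub_distrib]
      exact Finset.sum_congr rfl (fun j _ => by simp [hz]; ring)
    rw [this]; ring
  rw [← Finset.sum_product', ← Finset.sum_product']
  have hLHS : ∑ p ∈ U ×ˢ (Finset.univ : Finset (Fin n)),
      |zbar p.1 p.2 - ∑ j, R p.1 p.2 j * v j| = ∑ p ∈ K, |e p.1 p.2| := by
    simp_rw [hv]
    refine (Finset.sum_subset hKsub ?_).symm
    intro p hpS hpK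
    have hp1 : p.1 ∉ UB := by
      intro h; exact hpK (Finset.mem_product.mpr ⟨h, Finset.mem_univ _⟩)
    simp [he p.1 hp1 p.2]
  have hRHS : ∑ p ∈ U ×ˢ (Finset.univ : Finset (Fin n)),
      |zbar p.1 p.2 - ∑ j, R p.1 p.2 j * w j|
      = ∑ p ∈ K, |e p.1 p.2 + ∑ j, R p.1 p.2 j * z j|
        + ∑ p ∈ (U ×ˢ (Finset.univ : Finset (Fin n))) \ K, |∑ j, R p.1 p.2 j * z j| := by
    simp_rw [hr]
    rw [← Finset.sum_sdiff hKsub, add_comm]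
    congr 1
    refine Finset.sum_congr rfl ?_
    intro p hp
    have hp1 : p.1 ∉ UB := by
      intro h
      exact (Finset.mem_sdiff.mp hp).2 (Finset.mem_product.mpr ⟨h, Finset.mem_univ _⟩)
    simp [he p.1 hp1 p.2]
  rw [hLHS, hRHS]
  have h1 : ∑ p ∈ K, |e p.1 p.2| - ∑ p ∈ K, |∑ j, R p.1 p.2 j * z j|
      ≤ ∑ p ∈ K, |e p.1 p.2 + ∑ j, R p.1 p.2 j * z j| := by
    rw [← Finset.sum_sub_distrib]
    refine Finset.sum_le_sum ?_
    intro p _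
    have h2 := abs_add_le (e p.1 p.2 + ∑ j, R p.1 p.2 j * z j) (-(∑ j, R p.1 p.2 j * z j))
    simp only [add_neg_cancel_right, abs_neg] at h2
    linarith
  linarith
end

section
/- Let n, m be positive integers, let f : ℝ^n → ℝ be differentiable at x ∈ ℝ^n, let A be an n×m real matrix and v : ℝ^n → ℝ^m a function such that ∇f(y) = A v(y) for all y ∈ ℝ^n. Let 𝒰 be a finite set of vectors u ∈ {0,1}^n, 𝒰_B ⊆ 𝒰, define R_{u,i} = u_i · A_i ∈ ℝ^m, let e : 𝒰 × {1,…,n} → ℝ satisfy e_{u,i} = 0 for u ∉ 𝒰_B, and set z̄_{u,i} = u_i · (∂f/∂x_i)(x) + e_{u,i}. Suppose q = n·|𝒰_B| and that for every subset 𝒦 ⊆ 𝒰 × {1,…,n} with |𝒦| = q and every z ≠ 0 one has Σ_{(u,i)∈𝒦} |R_{u,i} · z| < Σ_{(u,i)∉𝒦} |R_{u,i} · z|. Then every minimizer v* of J(w) = Σ_{u,i} |z̄_{u,i} − R_{u,i} · w| satisfies A v* = ∇f(x); that is, the decoded vector reproduces the exact gradient of f at x. -/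
/-- Secure recovery of the gradient. Under Assumption A (`∇f(y) = A v(y)`
for all `y`, expressed through partial derivatives `∂f/∂x_i(y) = fderiv ℝ f y (Pi.single i 1)`),
with observations `z̄ u i = u_i·∂f/∂x_i(x) + e u i` corrupted only on Byzantine patterns
`UB`, `q = n·|UB|`, and the strict row condition, every minimizer `v*` of the secure ℓ1
decoder satisfies `A v* = ∇f(x)`. -/
theorem stmt_8 (n m : ℕ) (hn : 0 < n) (hm : 0 < m)
    (f : (Fin n → ℝ) → ℝ) (x : Fin n → ℝ) (hf : DifferentiableAt ℝ f x)
    (A : Matrix (Fin n) (Fin m) ℝ) (v : (Fin n → ℝ) → Fin m → ℝ)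
    (hAv : ∀ y : Fin n → ℝ, ∀ i : Fin n,
      fderiv ℝ f y (Pi.single i 1) = ∑ j, A i j * v y j)
    (U UB : Finset (Fin n → Bool)) (hUB : UB ⊆ U)
    (R : (Fin n → Bool) → Fin n → Fin m → ℝ)
    (hR : ∀ u i j, R u i j = (if u i then (1 : ℝ) else 0) * A i j)
    (e : (Fin n → Bool) → Fin n → ℝ)
    (he : ∀ u ∉ UB, ∀ i, e u i = 0)
    (zbar : (Fin n → Bool) → Fin n → ℝ)
    (hzbar : ∀ u i, zbar u i =
      (if u i then (1 : ℝ) else 0) * fderiv ℝ f x (Pi.single i 1) + e u i)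
    (q : ℕ) (hq : q = n * UB.card)
    (hcond : ∀ K : Finset ((Fin n → Bool) × Fin n),
      K ⊆ U ×ˢ Finset.univ → K.card = q →
      ∀ z : Fin m → ℝ, z ≠ 0 →
        ∑ p ∈ K, |∑ j, R p.1 p.2 j * z j| <
          ∑ p ∈ (U ×ˢ Finset.univ) \ K, |∑ j, R p.1 p.2 j * z j|) :
    ∀ vstar : Fin m → ℝ,
      (∀ w : Fin m → ℝ,
        ∑ u ∈ U, ∑ i, |zbar u i - ∑ j, R u i j * vstar j| ≤
          ∑ u ∈ U, ∑ i, |zbar u i - ∑ j, R u i j * w j|) →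
      ∀ i : Fin n, ∑ j, A i j * vstar j = fderiv ℝ f x (Pi.single i 1) := by

  intro vstar hmin
  have hrow : ∀ (w : Fin m → ℝ) u i, ∑ j, R u i j * w j
      = (if u i then (1:ℝ) else 0) * ∑ j, A i j * w j := by
    intro w u i
    rw [Finset.mul_sum]
    refine Finset.sum_congr rfl fun j _ => ?_
    rw [hR]; ring
  have hvx : ∀ u i, ∑ j, R u i j * v x j
      = (if u i then (1:ℝ) else 0) * fderiv ℝ f x (Pi.single i 1) := by
    intro u i; rw [hrow, hAv x i]
  set z : Fin m → ℝ := fun j => v x j - vstar j with hz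
  have hres : ∀ u i, zbar u i - ∑ j, R u i j * vstar j
      = e u i + ∑ j, R u i j * z j := by
    intro u i
    have h1 : ∑ j, R u i j * z j
        = ∑ j, R u i j * v x j - ∑ j, R u i j * vstar j := by
      rw [← Finset.sum_sub_distrib]
      exact Finset.sum_congr rfl fun j _ => by simp [hz]; ring
    rw [hzbar u i, h1, hvx]; ring
  have hzero : z = 0 := by
    by_contra hne
    set K := UB ×ˢ (Finset.univ : Finset (Fin n)) with hK
    have hKsub : K ⊆ U ×ˢ Finset.univ :=
      Finset.product_subset_product hUB (Finset.Subset.refl _)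
    have hKcard : K.card = q := by
      simp [hK, Finset.card_product, hq, Nat.mul_comm]
    have hlt := hcond K hKsub hKcard z hne
    set D : (Fin n → Bool) × Fin n → ℝ := fun p => ∑ j, R p.1 p.2 j * z j with hD
    have hJstar : ∑ u ∈ U, ∑ i, |zbar u i - ∑ j, R u i j * vstar j|
        = ∑ p ∈ U ×ˢ Finset.univ, |e p.1 p.2 + D p| := by
      rw [Finset.sum_product]
      exact Finset.sum_congr rfl fun u _ =>
        Finset.sum_congr rfl fun i _ => by rw [hres]
    have hJvx : ∑ u ∈ U, ∑ i, |zbar u i - ∑ j, R u i j * v x j|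
        = ∑ p ∈ U ×ˢ Finset.univ, |e p.1 p.2| := by
      rw [Finset.sum_product]
      refine Finset.sum_congr rfl fun u _ => Finset.sum_congr rfl fun i _ => ?_
      rw [hzbar u i, hvx]
      congr 1; ring
    have hcompl : ∀ p ∈ (U ×ˢ Finset.univ) \ K, e p.1 p.2 = 0 := by
      intro p hp
      rcases Finset.mem_sdiff.mp hp with ⟨hpU, hpK⟩
      refine he p.1 (fun hmem => hpK ?_) p.2
      exact Finset.mem_product.mpr ⟨hmem, Finset.mem_univ _⟩
    have heK : ∑ p ∈ U ×ˢ Finset.univ, |e p.1 p.2| = ∑ p ∈ K, |e p.1 p.2| := by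
      symm
      refine Finset.sum_subset hKsub fun p hp hpK => ?_
      rw [hcompl p (Finset.mem_sdiff.mpr ⟨hp, hpK⟩)]; simp
    have hsplit : ∑ p ∈ (U ×ˢ Finset.univ) \ K, |e p.1 p.2 + D p|
          + ∑ p ∈ K, |e p.1 p.2 + D p|
        = ∑ p ∈ U ×ˢ Finset.univ, |e p.1 p.2 + D p| :=
      Finset.sum_sdiff hKsub
    have hdiff : ∑ p ∈ (U ×ˢ Finset.univ) \ K, |e p.1 p.2 + D p|
        = ∑ p ∈ (U ×ˢ Finset.univ) \ K, |D p| := by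
      refine Finset.sum_congr rfl fun p hp => ?_
      rw [hcompl p hp, zero_add]
    have hKlb : ∑ p ∈ K, |e p.1 p.2| - ∑ p ∈ K, |D p|
        ≤ ∑ p ∈ K, |e p.1 p.2 + D p| := by
      rw [← Finset.sum_sub_distrib]
      refine Finset.sum_le_sum fun p _ => ?_
      have := abs_add_le (e p.1 p.2 + D p) (-(D p))
      simp only [add_neg_cancel_right, abs_neg] at this
      linarith
    have hmin' := hmin (v x)
    rw [hJstar, hJvx, heK] at hmin'
    rw [← hsplit, hdiff] at hmin'
    linarith
  have hvs : vstar = v x := by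
    funext j
    have := congrFun hzero j
    simp only [hz, Pi.zero_apply, sub_eq_zero] at this
    exact this.symm
  intro i
  rw [hvs, ← hAv x i]
end

section
/- Let n be a positive integer, let f : ℝ^n → ℝ be twice continuously differentiable, let x ∈ ℝ^n, δ > 0, and suppose the operator norm of the second derivative of f is bounded by M ≥ 0 on the closed ball of radius δ·√n centered at x. Then for every i ∈ {1,…,n}: | (1/2^n) · Σ_{Δ ∈ {−1,1}^n} (f(x + δΔ) − f(x))/(δΔ_i) − (∂f/∂x_i)(x) | ≤ (M · n · δ)/2. In particular, as δ → 0 the expected simultaneous-perturbation estimate converges to the partial derivative ∂f/∂x_i(x). -/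
/-!
Expanding `f` to second order around `x` gives `f (x + δΔ) - f x = δ f'(x) Δ + R_Δ` with
`|R_Δ| ≤ M ‖δΔ‖² / 2 = M n δ² / 2`. Dividing by `δΔᵢ` is multiplying by `Δᵢ / δ`, and the
sign vectors are isotropic, `𝔼 Δᵢ Δⱼ = [i = j]`, so the linear part averages exactly to
`f'(x) eᵢ`, while the remainder contributes at most `M n δ / 2` to every term.
-/

/-- The sign vector `Δ ∈ {−1,1}^n` (as an element of Euclidean space, so that
`‖δ • Δ‖ = δ√n`) associated with a Boolean pattern: `1` for `true`, `-1` for `false`.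
Summing over all `s : Fin n → Bool` enumerates all sign vectors. -/
noncomputable def signVecE (n : ℕ) (s : Fin n → Bool) : EuclideanSpace ℝ (Fin n) :=
  (WithLp.equiv 2 (Fin n → ℝ)).symm fun j => if s j then 1 else -1

open Set Metric Finset
open scoped BigOperators

section Taylor
variable {E F : Type*} [NormedAddCommGroup E] [NormedSpace ℝ E]
  [NormedAddCommGroup F] [NormedSpace ℝ F]

lemma norm_image_add_sub_sub_fderiv_le {f : E → F} (hf : Differentiable ℝ f) {x v : E} {M : ℝ}
    (hlip : ∀ y ∈ closedBall x ‖v‖, ‖fderiv ℝ f y - fderiv ℝ f x‖ ≤ M * ‖y - x‖) :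
    ‖f (x + v) - f x - fderiv ℝ f x v‖ ≤ M * ‖v‖ ^ 2 / 2 := by
  set g : ℝ → F := fun t => f (x + t • v) - f x - t • fderiv ℝ f x v
  have hg (t : ℝ) : HasDerivAt g (fderiv ℝ f (x + t • v) v - fderiv ℝ f x v) t := by
    have hline : HasDerivAt (fun t : ℝ => x + t • v) v t := by
      simpa using ((hasDerivAt_id t).smul_const v).const_add x
    exact ((((hf _).hasFDerivAt.comp_hasDerivAt t hline).sub_const (f x)).sub
      ((hasDerivAt_id t).smul_const (fderiv ℝ f x v))).congr_deriv (by rw [one_smul])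
  have hg' : ∀ t ∈ Ico (0 : ℝ) 1,
      ‖fderiv ℝ f (x + t • v) v - fderiv ℝ f x v‖ ≤ M * ‖v‖ ^ 2 * t := by
    intro t ht
    have hnorm : ‖x + t • v - x‖ = t * ‖v‖ := by
      rw [add_sub_cancel_left, norm_smul, Real.norm_of_nonneg ht.1]
    have hy : x + t • v ∈ closedBall x ‖v‖ := by
      rw [mem_closedBall, dist_eq_norm, hnorm]
      exact mul_le_of_le_one_left (norm_nonneg v) ht.2.le
    calc ‖fderiv ℝ f (x + t • v) v - fderiv ℝ f x v‖
        ≤ ‖fderiv ℝ f (x + t • v) - fderiv ℝ f x‖ * ‖v‖ :=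
          (fderiv ℝ f (x + t • v) - fderiv ℝ f x).le_opNorm v
      _ ≤ M * ‖x + t • v - x‖ * ‖v‖ := by gcongr; exact hlip _ hy
      _ = M * ‖v‖ ^ 2 * t := by rw [hnorm]; ring
  have hB (t : ℝ) : HasDerivAt (fun t => M * ‖v‖ ^ 2 * t ^ 2 / 2) (M * ‖v‖ ^ 2 * t) t :=
    (((hasDerivAt_pow 2 t).const_mul (M * ‖v‖ ^ 2)).div_const 2).congr_deriv (by norm_num; ring)
  simpa [g] using image_norm_le_of_norm_deriv_right_le_deriv_boundary
    (fun t _ => (hg t).continuousAt.continuousWithinAt) (fun t _ => (hg t).hasDerivWithinAt)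
    (by simp [g]) hB hg' (right_mem_Icc.2 zero_le_one)

lemma norm_image_add_sub_sub_fderiv_le_of_norm_iteratedFDeriv_le {f : E → F}
    (hf : ContDiff ℝ 2 f) {x v : E} {M : ℝ}
    (hM : ∀ y ∈ closedBall x ‖v‖, ‖iteratedFDeriv ℝ 2 f y‖ ≤ M) :
    ‖f (x + v) - f x - fderiv ℝ f x v‖ ≤ M * ‖v‖ ^ 2 / 2 := by
  have hf' : ContDiff ℝ 1 (fderiv ℝ f) := hf.fderiv_right le_rfl
  refine norm_image_add_sub_sub_fderiv_le (hf.differentiable two_ne_zero) fun y hy => ?_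
  refine (convex_closedBall x ‖v‖).norm_image_sub_le_of_norm_fderiv_le
    (fun z _ => hf'.differentiable one_ne_zero z) (fun z hz => ?_)
    (mem_closedBall_self (norm_nonneg v)) hy
  rw [← norm_iteratedFDeriv_one, norm_iteratedFDeriv_fderiv]
  exact hM z hz

end Taylor

lemma expect_pi_bool_eq_one_div_two_pow_mul_sum {n : ℕ} (g : (Fin n → Bool) → ℝ) :
    𝔼 s, g s = 1 / 2 ^ n * ∑ s, g s := by
  rw [Fintype.expect_eq_sum_div_card]
  simp [div_eq_inv_mul]

namespace signVecE

variable {n : ℕ}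

@[simp] lemma apply (s : Fin n → Bool) (j : Fin n) :
    signVecE n s j = if s j then 1 else -1 := rfl

lemma mul_self (s : Fin n → Bool) (j : Fin n) : signVecE n s j * signVecE n s j = 1 := by
  rw [apply]; split <;> norm_num

lemma abs_apply (s : Fin n → Bool) (j : Fin n) : |signVecE n s j| = 1 := by
  rw [apply]; split <;> norm_num

lemma norm_eq (s : Fin n → Bool) : ‖signVecE n s‖ = Real.sqrt n := by
  simp [EuclideanSpace.norm_eq, apply_ite]

lemma sum_apply_mul_apply_of_ne {i j : Fin n} (hij : i ≠ j) :
    ∑ s, signVecE n s i * signVecE n s j = 0 := by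
  let flip (s : Fin n → Bool) : Fin n → Bool := Function.update s j (!s j)
  have hflip : ∀ s, signVecE n (flip s) i * signVecE n (flip s) j
      = -(signVecE n s i * signVecE n s j) := fun s => by
    simp only [apply, flip, Function.update_of_ne hij, Function.update_self]
    cases s i <;> cases s j <;> norm_num
  have hflip_inv : Function.Involutive flip := fun s => by simp [flip]
  have := hflip_inv.bijective.sum_comp fun s => signVecE n s i * signVecE n s j
  rw [sum_congr rfl fun s _ => hflip s, sum_neg_distrib] at this
  linarith

lemma sum_apply_mul_apply (i j : Fin n) :
    ∑ s, signVecE n s i * signVecE n s j = if i = j then 2 ^ n else 0 := by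
  split_ifs with hij
  · simp [hij, mul_self, -apply]
  · exact sum_apply_mul_apply_of_ne hij

lemma sum_apply_smul (i : Fin n) :
    ∑ s, signVecE n s i • signVecE n s = (2 ^ n : ℝ) • EuclideanSpace.single i 1 := by
  ext j
  simp only [WithLp.ofLp_sum, WithLp.ofLp_smul, Finset.sum_apply, Pi.smul_apply, smul_eq_mul]
  rw [sum_apply_mul_apply]
  simp [eq_comm]

lemma expect_apply_mul_map (L : EuclideanSpace ℝ (Fin n) →L[ℝ] ℝ) (i : Fin n) :
    𝔼 s, signVecE n s i * L (signVecE n s) = L (EuclideanSpace.single i 1) := by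
  have h := congrArg L (sum_apply_smul i)
  simp only [map_sum, map_smul, smul_eq_mul] at h
  rw [expect_pi_bool_eq_one_div_two_pow_mul_sum, h]
  field_simp

end signVecE

theorem stmt_11_general (n : ℕ) (f : EuclideanSpace ℝ (Fin n) → ℝ)
    (hf : ContDiff ℝ 2 f) (x : EuclideanSpace ℝ (Fin n)) (δ : ℝ) (hδ : 0 < δ)
    (M : ℝ)
    (hbound : ∀ y ∈ Metric.closedBall x (δ * Real.sqrt n),
      ‖iteratedFDeriv ℝ 2 f y‖ ≤ M) :
    ∀ i : Fin n,
      |(1 / 2 ^ n : ℝ) *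
          (∑ s : Fin n → Bool,
            (f (x + δ • signVecE n s) - f x) / (δ * (if s i then (1 : ℝ) else -1))) -
        fderiv ℝ f x (EuclideanSpace.single i 1)| ≤ M * n * δ / 2 := by
  intro i
  set L := fderiv ℝ f x
  have hterm : ∀ s, |(f (x + δ • signVecE n s) - f x) / (δ * (if s i then (1 : ℝ) else -1))
      - signVecE n s i * L (signVecE n s)| ≤ M * n * δ / 2 := fun s => by
    have hnorm : ‖δ • signVecE n s‖ = δ * Real.sqrt n := by
      rw [norm_smul, signVecE.norm_eq, Real.norm_of_nonneg hδ.le]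
    have htaylor := norm_image_add_sub_sub_fderiv_le_of_norm_iteratedFDeriv_le hf (hnorm ▸ hbound)
    rw [hnorm, mul_pow, Real.sq_sqrt n.cast_nonneg, Real.norm_eq_abs] at htaylor
    have hsplit : (f (x + δ • signVecE n s) - f x) / (δ * (if s i then (1 : ℝ) else -1))
        - signVecE n s i * L (signVecE n s)
        = signVecE n s i * ((f (x + δ • signVecE n s) - f x - L (δ • signVecE n s)) / δ) := by
      rw [map_smul, smul_eq_mul, signVecE.apply]
      split
      · field_simp
      · field_simp; ring
    rw [hsplit, abs_mul, signVecE.abs_apply, one_mul, abs_div, abs_of_pos hδ, div_le_iff₀ hδ]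
    exact htaylor.trans_eq (by ring)
  rw [← expect_pi_bool_eq_one_div_two_pow_mul_sum, ← signVecE.expect_apply_mul_map L i,
    ← expect_sub_distrib]
  exact (abs_expect_le _ _).trans (expect_le univ_nonempty fun s _ => hterm s)

/-- For `f` twice continuously differentiable with second derivative bounded
in operator norm by `M` on the closed ball of radius `δ√n` around `x`, the expected
simultaneous-perturbation estimate `(f(x+δΔ)−f(x))/(δΔ_i)` differs from `∂f/∂x_i(x)` by at
most `M n δ / 2`. -/
theorem stmt_11 (n : ℕ) (hn : 0 < n) (f : EuclideanSpace ℝ (Fin n) → ℝ)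
    (hf : ContDiff ℝ 2 f) (x : EuclideanSpace ℝ (Fin n)) (δ : ℝ) (hδ : 0 < δ)
    (M : ℝ) (hM : 0 ≤ M)
    (hbound : ∀ y ∈ Metric.closedBall x (δ * Real.sqrt n),
      ‖iteratedFDeriv ℝ 2 f y‖ ≤ M) :
    ∀ i : Fin n,
      |(1 / 2 ^ n : ℝ) *
          (∑ s : Fin n → Bool,
            (f (x + δ • signVecE n s) - f x) / (δ * (if s i then (1 : ℝ) else -1))) -
        fderiv ℝ f x (EuclideanSpace.single i 1)| ≤ M * n * δ / 2 :=
  stmt_11_general n f hf x δ hδ M hbound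
end
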